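/- Suppose the marginal value function is constant: v(x) = v > 0 for all x ∈ [0,Q]. Then the M-point bid (q,b) given by q_k = kQ/M and b_k = (v/(M+1))·Σ_{k'=k}^M (M/(M+1))^{k'−k} for k ∈ {1,…,M} is a minimax-loss bid in the constrained pay-as-bid auction, i.e., it minimizes L^PAB over all M-point bids; in particular the optimal quantity points are evenly spaced. -/

import Mathlib

open MeasureTheory intervalIntegral

noncomputable section

/-- Positive part `(x)₊ = max(x,0)`. -/
def pos (x : ℝ) : ℝ := max x 0

/-- An `M`-point bid `(q,b)`: `0 = q_0 ≤ q_1 ≤ … ≤ q_M ≤ Q` and `b_1 ≥ … ≥ b_M ≥ 0`. -/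
def IsBidPts (Q : ℝ) (M : ℕ) (q b : ℕ → ℝ) : Prop :=
  q 0 = 0 ∧ (∀ k, k < M → q k ≤ q (k + 1)) ∧ q M ≤ Q ∧
    (∀ k, 1 ≤ k → k < M → b (k + 1) ≤ b k) ∧ 0 ≤ b M

/-- The step bid function induced by the `M`-point bid `(q,b)`:
`b̂(x) = b_k` for `q_{k−1} ≤ x < q_k` and `b̂(x) = 0` for `x ≥ q_M`. -/
def bhat (M : ℕ) (q b : ℕ → ℝ) (x : ℝ) : ℝ :=
  ∑ k ∈ Finset.Icc 1 M, if q (k - 1) ≤ x ∧ x < q k then b k else 0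

/-- Conditional regret at quantity `t` in the bidpoint-constrained pay-as-bid auction:
`R^PAB_t(q,b) = ∫_0^t (b̂(x) − b̂(t)) dx + ∫_t^Q (v(x) − b̂(t))₊ dx`. -/
def Rcpab (Q : ℝ) (M : ℕ) (v : ℝ → ℝ) (q b : ℕ → ℝ) (t : ℝ) : ℝ :=
  (∫ x in (0:ℝ)..t, (bhat M q b x - bhat M q b t))
    + ∫ x in t..Q, pos (v x - bhat M q b t)

/-- Loss in the bidpoint-constrained pay-as-bid auction:
`L^PAB(q,b) = sup_{t ∈ [0,Q]} R^PAB_t(q,b)`. -/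
def Lcpab (Q : ℝ) (M : ℕ) (v : ℝ → ℝ) (q b : ℕ → ℝ) : ℝ :=
  sSup {r : ℝ | ∃ t ∈ Set.Icc (0:ℝ) Q, r = Rcpab Q M v q b t}

/-- A minimax-loss `M`-point bid in the constrained pay-as-bid auction. -/
def IsMinimaxCPAB (Q : ℝ) (M : ℕ) (v : ℝ → ℝ) (q b : ℕ → ℝ) : Prop :=
  IsBidPts Q M q b ∧ ∀ q' b', IsBidPts Q M q' b' → Lcpab Q M v q b ≤ Lcpab Q M v q' b'

/-- Loss in the bidpoint-constrained uniform-price auction: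
`L^LAB(q,b) = max( max_{1≤k≤M} max( q_k·b_k , ∫_{q_{k−1}}^Q (v(x) − b_k)₊ dx ) , ∫_{q_M}^Q v )`. -/
def Lclab (Q : ℝ) (M : ℕ) (hM : 1 ≤ M) (v : ℝ → ℝ) (q b : ℕ → ℝ) : ℝ :=
  max ((Finset.Icc 1 M).sup' (Finset.nonempty_Icc.mpr hM)
        (fun k => max (q k * b k) (∫ x in q (k - 1)..Q, pos (v x - b k))))
      (∫ x in q M..Q, v x)

/-- A minimax-loss `M`-point bid in the constrained uniform-price auction. -/
def IsMinimaxCLAB (Q : ℝ) (M : ℕ) (hM : 1 ≤ M) (v : ℝ → ℝ) (q b : ℕ → ℝ) : Prop :=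
  IsBidPts Q M q b ∧
    ∀ q' b', IsBidPts Q M q' b' → Lclab Q M hM v q b ≤ Lclab Q M hM v q' b'

/-- The marginal value function: weakly decreasing, nonnegative and integrable on `[0,Q]`. -/
def IsValueFn (Q : ℝ) (v : ℝ → ℝ) : Prop :=
  AntitoneOn v (Set.Icc 0 Q) ∧ (∀ x ∈ Set.Icc (0:ℝ) Q, 0 ≤ v x) ∧
    IntervalIntegrable v volume 0 Q

/-!
Against a constant value `v₀`, let `L` be the loss of a bid and `P k = L - ∫₀^{q_k} b̂ + q_k v₀`.
Since `b̂(q_k) ≤ b_{k+1}`, the regret at `q_k` gives `Q (v₀ - b_{k+1}) ≤ P k`, hence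
`P (k + 1) ≤ P k (1 + (q_{k+1} - q_k) / Q)`; moreover `P 0 = L` and the regret at `q_M` gives
`Q v₀ ≤ P M`. The increments `q_{k+1} - q_k` sum to at most `Q`, so AM-GM yields
`L ≥ Q v₀ (M / (M + 1))^M` for every bid. In closed form the proposed bids are
`b_k = v₀ (1 - (M / (M + 1))^(M + 1 - k))`; on the evenly spaced grid they make the regret at every
left endpoint `q_{k-1}` equal to exactly this value, and within a step the regret decreases.
-/

open Finset

lemma exists_mem_Ico_of_lt {q : ℕ → ℝ} {M : ℕ} {t : ℝ} (h0 : q 0 ≤ t) (hM : t < q M) :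
    ∃ j, 1 ≤ j ∧ j ≤ M ∧ t ∈ Set.Ico (q (j - 1)) (q j) := by
  have hex : ∃ j, t < q j := ⟨M, hM⟩
  have hpos : 1 ≤ Nat.find hex := Nat.one_le_iff_ne_zero.2 fun h0' => by
    have := Nat.find_spec hex
    rw [h0'] at this
    linarith
  exact ⟨Nat.find hex, hpos, Nat.find_min' hex hM,
    not_lt.1 (Nat.find_min hex (by omega)), Nat.find_spec hex⟩

def bidArea (q b : ℕ → ℝ) (k : ℕ) : ℝ := ∑ j ∈ Icc 1 k, (q j - q (j - 1)) * b j

lemma bidArea_zero (q b : ℕ → ℝ) : bidArea q b 0 = 0 := by simp [bidArea]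

lemma bidArea_succ (q b : ℕ → ℝ) (k : ℕ) :
    bidArea q b (k + 1) = bidArea q b k + (q (k + 1) - q k) * b (k + 1) := by
  rw [bidArea, sum_Icc_succ_top (by omega), Nat.add_sub_cancel, bidArea]

lemma intervalIntegrable_bhat (M : ℕ) (q b : ℕ → ℝ) (a c : ℝ) :
    IntervalIntegrable (bhat M q b) volume a c := by
  have hsum : bhat M q b = ∑ k ∈ Icc 1 M, (Set.Ico (q (k - 1)) (q k)).indicator fun _ => b k := by
    ext x
    simp only [bhat, Finset.sum_apply, Set.indicator_apply, Set.mem_Ico]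
  rw [hsum]
  refine IntervalIntegrable.sum _ fun k _ => ?_
  rw [intervalIntegrable_iff]
  exact (integrableOn_const measure_Ioc_lt_top.ne).indicator measurableSet_Ico

lemma Rcpab_const (Q : ℝ) (M : ℕ) (v₀ : ℝ) (q b : ℕ → ℝ) (t : ℝ) :
    Rcpab Q M (fun _ => v₀) q b t =
      (∫ x in (0 : ℝ)..t, bhat M q b x) - t * bhat M q b t + (Q - t) * pos (v₀ - bhat M q b t) := by
  rw [Rcpab, integral_sub (intervalIntegrable_bhat ..) intervalIntegrable_const,
    intervalIntegral.integral_const, intervalIntegral.integral_const, smul_eq_mul, smul_eq_mul,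
    sub_zero]

lemma prod_le_arith_mean_pow {ι : Type*} (s : Finset ι) (z : ι → ℝ) (hz : ∀ i ∈ s, 0 ≤ z i) :
    ∏ i ∈ s, z i ≤ ((∑ i ∈ s, z i) / #s) ^ #s := by
  rcases s.eq_empty_or_nonempty with rfl | hs
  · simp
  have hn : (#s : ℝ) ≠ 0 := by exact_mod_cast hs.card_pos.ne'
  have hamgm := Real.geom_mean_le_arith_mean_weighted s (fun _ => (#s : ℝ)⁻¹) z
    (fun _ _ => by positivity) (by simp [hn]) hz
  calc ∏ i ∈ s, z i = (∏ i ∈ s, z i ^ ((#s : ℝ)⁻¹)) ^ #s := by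
        rw [← prod_pow]
        exact prod_congr rfl fun i hi =>
          (Real.rpow_inv_natCast_pow (hz i hi) (by exact_mod_cast hn)).symm
    _ ≤ (∑ i ∈ s, (#s : ℝ)⁻¹ * z i) ^ #s :=
        pow_le_pow_left₀ (prod_nonneg fun i hi => Real.rpow_nonneg (hz i hi) _) hamgm _
    _ = ((∑ i ∈ s, z i) / #s) ^ #s := by rw [← mul_sum, inv_mul_eq_div]

lemma le_mul_prod_range_of_le_mul {P a : ℕ → ℝ} {n : ℕ} (ha : ∀ k < n, 0 ≤ a k)
    (hP : ∀ k < n, P (k + 1) ≤ P k * a k) : P n ≤ P 0 * ∏ k ∈ range n, a k := by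
  induction n with
  | zero => simp
  | succ n ih =>
    calc P (n + 1) ≤ P n * a n := hP n n.lt_succ_self
      _ ≤ (P 0 * ∏ k ∈ range n, a k) * a n :=
        mul_le_mul_of_nonneg_right (ih (fun k hk => ha k (by omega)) fun k hk => hP k (by omega))
          (ha n n.lt_succ_self)
      _ = P 0 * ∏ k ∈ range (n + 1), a k := by rw [prod_range_succ, mul_assoc]

namespace IsBidPts

variable {Q : ℝ} {M : ℕ} {q b : ℕ → ℝ}

lemma monotoneOn_q (h : IsBidPts Q M q b) : MonotoneOn q (Set.Iic M) :=
  monotoneOn_of_le_add_one Set.ordConnected_Iic fun k _ _ hk => h.2.1 k hk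

lemma antitoneOn_b (h : IsBidPts Q M q b) : AntitoneOn b (Set.Icc 1 M) :=
  antitoneOn_of_add_one_le Set.ordConnected_Icc fun k _ hk hk1 => h.2.2.2.1 k hk.1 hk1.2

lemma q_le_q (h : IsBidPts Q M q b) {i j : ℕ} (hij : i ≤ j) (hj : j ≤ M) : q i ≤ q j :=
  h.monotoneOn_q (hij.trans hj) hj hij

lemma b_le_b (h : IsBidPts Q M q b) {i j : ℕ} (hi : 1 ≤ i) (hij : i ≤ j) (hj : j ≤ M) :
    b j ≤ b i :=
  h.antitoneOn_b ⟨hi, hij.trans hj⟩ ⟨hi.trans hij, hj⟩ hij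

lemma q_nonneg (h : IsBidPts Q M q b) {k : ℕ} (hk : k ≤ M) : 0 ≤ q k :=
  h.1 ▸ h.q_le_q k.zero_le hk

lemma q_le (h : IsBidPts Q M q b) {k : ℕ} (hk : k ≤ M) : q k ≤ Q :=
  (h.q_le_q hk le_rfl).trans h.2.2.1

lemma b_nonneg (h : IsBidPts Q M q b) {k : ℕ} (hk : 1 ≤ k) (hkM : k ≤ M) : 0 ≤ b k :=
  h.2.2.2.2.trans (h.b_le_b hk hkM le_rfl)

lemma bhat_eq_of_mem_Ico (h : IsBidPts Q M q b) {j : ℕ} (hj : 1 ≤ j) (hjM : j ≤ M) {t : ℝ}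
    (ht : t ∈ Set.Ico (q (j - 1)) (q j)) : bhat M q b t = b j := by
  rw [bhat, sum_eq_single_of_mem j (mem_Icc.2 ⟨hj, hjM⟩), if_pos (Set.mem_Ico.1 ht)]
  rintro i hi hij
  rw [if_neg]
  rintro ⟨hi1, hi2⟩
  rw [mem_Icc] at hi
  rcases lt_or_gt_of_ne hij with hlt | hgt
  · linarith [ht.1, h.q_le_q (show i ≤ j - 1 by omega) (by omega)]
  · linarith [ht.2, h.q_le_q (show j ≤ i - 1 by omega) (by omega)]

lemma bhat_eq_zero_of_le (h : IsBidPts Q M q b) {t : ℝ} (ht : q M ≤ t) : bhat M q b t = 0 :=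
  sum_eq_zero fun _ hk => if_neg fun hk' =>
    (hk'.2.trans_le ((h.q_le_q (mem_Icc.1 hk).2 le_rfl).trans ht)).false

lemma bhat_cases (h : IsBidPts Q M q b) (t : ℝ) :
    bhat M q b t = 0 ∨ ∃ j, 1 ≤ j ∧ j ≤ M ∧ t ∈ Set.Ico (q (j - 1)) (q j) ∧ bhat M q b t = b j := by
  by_cases hc : ∃ j, 1 ≤ j ∧ j ≤ M ∧ t ∈ Set.Ico (q (j - 1)) (q j)
  · obtain ⟨j, hj, hjM, ht⟩ := hc
    exact Or.inr ⟨j, hj, hjM, ht, h.bhat_eq_of_mem_Ico hj hjM ht⟩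
  · refine Or.inl <| sum_eq_zero fun k hk => if_neg fun htk => hc ?_
    exact ⟨k, (mem_Icc.1 hk).1, (mem_Icc.1 hk).2, htk⟩

lemma bhat_nonneg (h : IsBidPts Q M q b) (t : ℝ) : 0 ≤ bhat M q b t := by
  rcases h.bhat_cases t with h0 | ⟨j, hj, hjM, -, hbj⟩
  · exact h0.ge
  · exact hbj ▸ h.b_nonneg hj hjM

lemma bhat_le (h : IsBidPts Q M q b) (t : ℝ) : bhat M q b t ≤ max (b 1) 0 := by
  rcases h.bhat_cases t with h0 | ⟨j, hj, hjM, -, hbj⟩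
  · exact h0 ▸ le_max_right _ _
  · exact hbj ▸ (h.b_le_b le_rfl hj hjM).trans (le_max_left _ _)

lemma bhat_q_le (h : IsBidPts Q M q b) {k : ℕ} (hk : k < M) : bhat M q b (q k) ≤ b (k + 1) := by
  rcases h.bhat_cases (q k) with h0 | ⟨j, hj, hjM, hkj, hbj⟩
  · exact h0 ▸ h.b_nonneg (by omega) hk
  · have hkj' : k + 1 ≤ j := by
      by_contra hjk
      linarith [hkj.2, h.q_le_q (show j ≤ k by omega) hk.le]
    exact hbj ▸ h.b_le_b (by omega) hkj' hjM

lemma integral_bhat_on_step (h : IsBidPts Q M q b) {k : ℕ} (hk : 1 ≤ k) (hkM : k ≤ M) {t : ℝ}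
    (ht : t ∈ Set.Icc (q (k - 1)) (q k)) :
    ∫ x in q (k - 1)..t, bhat M q b x = (t - q (k - 1)) * b k := by
  have hae : ∀ᵐ x : ℝ, x ∈ Set.uIoc (q (k - 1)) t → bhat M q b x = b k := by
    filter_upwards [compl_mem_ae_iff.2 (measure_singleton (q k))] with x hx hmem
    rw [Set.uIoc_of_le ht.1] at hmem
    exact h.bhat_eq_of_mem_Ico hk hkM ⟨hmem.1.le, hmem.2.trans ht.2 |>.lt_of_ne hx⟩
  rw [integral_congr_ae hae, intervalIntegral.integral_const, smul_eq_mul]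

lemma integral_bhat_q (h : IsBidPts Q M q b) {k : ℕ} (hk : k ≤ M) :
    ∫ x in (0 : ℝ)..q k, bhat M q b x = bidArea q b k := by
  induction k with
  | zero => simp [h.1, bidArea_zero]
  | succ k ih =>
    have hq : q k ≤ q (k + 1) := h.2.1 k hk
    have hstep := h.integral_bhat_on_step (k := k + 1) (by omega) hk ⟨hq, le_rfl⟩
    rw [Nat.add_sub_cancel] at hstep
    rw [← integral_add_adjacent_intervals (intervalIntegrable_bhat ..)
      (intervalIntegrable_bhat ..), ih (by omega), bidArea_succ, hstep]

lemma integral_bhat_of_mem_Icc (h : IsBidPts Q M q b) {k : ℕ} (hk : 1 ≤ k) (hkM : k ≤ M) {t : ℝ}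
    (ht : t ∈ Set.Icc (q (k - 1)) (q k)) :
    ∫ x in (0 : ℝ)..t, bhat M q b x = bidArea q b (k - 1) + (t - q (k - 1)) * b k := by
  rw [← integral_add_adjacent_intervals (b := q (k - 1)) (intervalIntegrable_bhat ..)
    (intervalIntegrable_bhat ..), h.integral_bhat_q (by omega), h.integral_bhat_on_step hk hkM ht]

lemma integral_bhat_of_le (h : IsBidPts Q M q b) {t : ℝ} (ht : q M ≤ t) :
    ∫ x in (0 : ℝ)..t, bhat M q b x = bidArea q b M := by
  have hzero : Set.EqOn (bhat M q b) 0 (Set.uIcc (q M) t) := fun x hx =>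
    h.bhat_eq_zero_of_le (Set.uIcc_of_le ht ▸ hx).1
  rw [← integral_add_adjacent_intervals (b := q M) (intervalIntegrable_bhat ..)
    (intervalIntegrable_bhat ..), h.integral_bhat_q le_rfl, integral_congr hzero]
  simp

variable (v₀ : ℝ)

lemma Rcpab_const_of_mem_Ico (h : IsBidPts Q M q b) {k : ℕ} (hk : 1 ≤ k) (hkM : k ≤ M) {t : ℝ}
    (ht : t ∈ Set.Ico (q (k - 1)) (q k)) :
    Rcpab Q M (fun _ => v₀) q b t =
      bidArea q b (k - 1) - q (k - 1) * b k + (Q - t) * pos (v₀ - b k) := by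
  rw [Rcpab_const, h.bhat_eq_of_mem_Ico hk hkM ht,
    h.integral_bhat_of_mem_Icc hk hkM (Set.Ico_subset_Icc_self ht)]
  ring

lemma Rcpab_const_of_le (h : IsBidPts Q M q b) {t : ℝ} (ht : q M ≤ t) :
    Rcpab Q M (fun _ => v₀) q b t = bidArea q b M + (Q - t) * pos v₀ := by
  rw [Rcpab_const, h.bhat_eq_zero_of_le ht, h.integral_bhat_of_le ht, mul_zero, sub_zero, sub_zero]

lemma bddAbove_Rcpab_const (h : IsBidPts Q M q b) :
    BddAbove {r | ∃ t ∈ Set.Icc (0 : ℝ) Q, r = Rcpab Q M (fun _ => v₀) q b t} := by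
  refine ⟨Q * max (b 1) 0 + Q * pos v₀, ?_⟩
  rintro r ⟨t, ⟨ht0, htQ⟩, rfl⟩
  have hint : ∫ x in (0 : ℝ)..t, bhat M q b x ≤ t * max (b 1) 0 := by
    simpa using integral_mono_on ht0 (intervalIntegrable_bhat ..) intervalIntegrable_const
      fun x _ => h.bhat_le x
  have hpos : pos (v₀ - bhat M q b t) ≤ pos v₀ :=
    max_le_max_right 0 (sub_le_self _ (h.bhat_nonneg t))
  have hpos0 : 0 ≤ pos (v₀ - bhat M q b t) := le_max_right _ _
  rw [Rcpab_const]
  linarith [mul_nonneg ht0 (h.bhat_nonneg t), mul_le_mul_of_nonneg_right htQ (le_max_right (b 1) 0),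
    mul_le_mul_of_nonneg_left hpos (sub_nonneg.2 htQ), mul_nonneg ht0 (hpos0.trans hpos)]

lemma Rcpab_le_Lcpab_const (h : IsBidPts Q M q b) {t : ℝ} (ht : t ∈ Set.Icc 0 Q) :
    Rcpab Q M (fun _ => v₀) q b t ≤ Lcpab Q M (fun _ => v₀) q b :=
  le_csSup (h.bddAbove_Rcpab_const v₀) ⟨t, ht, rfl⟩

lemma bidArea_nonneg (h : IsBidPts Q M q b) {k : ℕ} (hk : k ≤ M) : 0 ≤ bidArea q b k :=
  sum_nonneg fun j hj => by
    obtain ⟨hj1, hjk⟩ := mem_Icc.1 hj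
    exact mul_nonneg (sub_nonneg.2 (h.q_le_q (Nat.sub_le j 1) (hjk.trans hk)))
      (h.b_nonneg hj1 (hjk.trans hk))

lemma sub_b_le_Lcpab_const (h : IsBidPts Q M q b) {k : ℕ} (hk : k < M) :
    Q * (v₀ - b (k + 1)) ≤ Lcpab Q M (fun _ => v₀) q b - bidArea q b k + q k * v₀ := by
  have hR := h.Rcpab_le_Lcpab_const v₀ ⟨h.q_nonneg hk.le, h.q_le hk.le⟩
  rw [Rcpab_const, h.integral_bhat_q hk.le] at hR
  have hpos : (Q - q k) * (v₀ - bhat M q b (q k)) ≤ (Q - q k) * pos (v₀ - bhat M q b (q k)) :=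
    mul_le_mul_of_nonneg_left (le_max_left _ _) (sub_nonneg.2 (h.q_le hk.le))
  linarith [mul_le_mul_of_nonneg_left (h.bhat_q_le hk) ((h.q_nonneg le_rfl).trans (h.q_le le_rfl))]

lemma prod_one_add_div_le (h : IsBidPts Q M q b) (hQ : 0 < Q) (hM : 1 ≤ M) :
    ∏ k ∈ range M, (1 + (q (k + 1) - q k) / Q) ≤ (((M : ℝ) + 1) / M) ^ M := by
  have hM0 : (0 : ℝ) < M := by exact_mod_cast hM
  have hsum : ∑ k ∈ range M, (1 + (q (k + 1) - q k) / Q) = M + q M / Q := by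
    simp [sum_add_distrib, ← sum_div, sum_range_sub q, h.1]
  calc ∏ k ∈ range M, (1 + (q (k + 1) - q k) / Q)
      ≤ ((∑ k ∈ range M, (1 + (q (k + 1) - q k) / Q)) / M) ^ M := by
        simpa using prod_le_arith_mean_pow (range M) _ fun k hk =>
          add_nonneg zero_le_one (div_nonneg (sub_nonneg.2 (h.2.1 k (mem_range.1 hk))) hQ.le)
    _ ≤ (((M : ℝ) + 1) / M) ^ M := by
        rw [hsum]
        gcongr
        · exact div_nonneg (add_nonneg hM0.le (div_nonneg (h.q_nonneg le_rfl) hQ.le)) hM0.le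
        · exact (div_le_one hQ).2 (h.q_le le_rfl)

theorem le_Lcpab_const (h : IsBidPts Q M q b) (hQ : 0 < Q) (hM : 1 ≤ M) :
    Q * v₀ * ((M : ℝ) / (M + 1)) ^ M ≤ Lcpab Q M (fun _ => v₀) q b := by
  have hRM := h.Rcpab_le_Lcpab_const v₀ ⟨h.q_nonneg le_rfl, h.q_le le_rfl⟩
  rw [h.Rcpab_const_of_le v₀ le_rfl] at hRM
  have hle_pos : v₀ ≤ pos v₀ := le_max_left _ _
  have hpos_nonneg : 0 ≤ pos v₀ := le_max_right _ _
  set L := Lcpab Q M (fun _ => v₀) q b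
  set P : ℕ → ℝ := fun k => L - bidArea q b k + q k * v₀
  have hδ : ∀ k < M, 0 ≤ q (k + 1) - q k := fun k hk => sub_nonneg.2 (h.2.1 k hk)
  have hstep : ∀ k < M, P (k + 1) ≤ P k * (1 + (q (k + 1) - q k) / Q) := fun k hk => by
    have hmul := mul_le_mul_of_nonneg_left (h.sub_b_le_Lcpab_const v₀ hk)
      (div_nonneg (hδ k hk) hQ.le)
    simp only [P, bidArea_succ]
    field_simp at hmul ⊢
    linarith
  have hlast : Q * v₀ ≤ P M := by
    have := mul_le_mul_of_nonneg_left hle_pos (sub_nonneg.2 (h.q_le le_rfl))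
    simp only [P]
    linarith
  have hL : 0 ≤ L := by
    linarith [h.bidArea_nonneg le_rfl, mul_nonneg (sub_nonneg.2 (h.q_le le_rfl)) hpos_nonneg]
  have hM0 : (0 : ℝ) < M := by exact_mod_cast hM
  have hchain := le_mul_prod_range_of_le_mul
    (fun k hk => by have := hδ k hk; positivity) hstep
  have hP0 : P 0 = L := by simp [P, bidArea_zero, h.1]
  calc Q * v₀ * ((M : ℝ) / (M + 1)) ^ M
      ≤ L * (((M : ℝ) + 1) / M) ^ M * ((M : ℝ) / (M + 1)) ^ M := by
        refine mul_le_mul_of_nonneg_right ?_ (by positivity)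
        exact hlast.trans (hP0 ▸ hchain) |>.trans
          (mul_le_mul_of_nonneg_left (h.prod_one_add_div_le hQ hM) hL)
    _ = L := by
        rw [mul_assoc, ← mul_pow, show ((M : ℝ) + 1) / M * (M / (M + 1)) = 1 by field_simp,
          one_pow, mul_one]

end IsBidPts

section EvenBid

variable {Q v₀ : ℝ} {M : ℕ} {q b : ℕ → ℝ}

lemma bid_eq_mul_one_sub_pow
    (hb : ∀ k, b k = v₀ / (M + 1) * ∑ j ∈ Icc k M, ((M : ℝ) / (M + 1)) ^ (j - k)) (k : ℕ) :
    b k = v₀ * (1 - ((M : ℝ) / (M + 1)) ^ (M + 1 - k)) := by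
  have hM1 : (M : ℝ) + 1 ≠ 0 := by positivity
  have hr : (M : ℝ) / (M + 1) - 1 = -1 / (M + 1) := by field_simp; ring
  rw [hb, ← Ico_add_one_right_eq_Icc, sum_Ico_eq_sum_range]
  simp only [Nat.add_sub_cancel_left]
  rw [geom_sum_eq (by rw [← sub_ne_zero, hr]; simp [hM1]), hr]
  field_simp
  ring

variable (hq : ∀ k, q k = k * Q / M) (hb : ∀ k, b k = v₀ * (1 - ((M : ℝ) / (M + 1)) ^ (M + 1 - k)))
include hq hb

lemma isBidPts_even (hQ : 0 ≤ Q) (hM : 1 ≤ M) (hv₀ : 0 ≤ v₀) : IsBidPts Q M q b := by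
  have hM0 : (M : ℝ) ≠ 0 := by positivity
  have hr0 : (0 : ℝ) ≤ M / (M + 1) := by positivity
  have hr1 : (M : ℝ) / (M + 1) ≤ 1 := by rw [div_le_one (by positivity)]; linarith
  refine ⟨by simp [hq], fun k _ => ?_, (by rw [hq, mul_div_cancel_left₀ Q hM0]),
    fun k hk _ => ?_, ?_⟩
  · rw [hq, hq]; gcongr; simp
  · rw [hb, hb]
    exact mul_le_mul_of_nonneg_left
      (sub_le_sub_left (pow_le_pow_of_le_one hr0 hr1 (by omega)) 1) hv₀
  · rw [hb]
    exact mul_nonneg hv₀ (sub_nonneg.2 (pow_le_one₀ hr0 hr1))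

lemma bidArea_even_add_sub_eq (hM : 1 ≤ M) {k : ℕ} (hk : k ≤ M) :
    bidArea q b k + (Q - q k) * v₀ - Q * b (k + 1) = Q * v₀ * ((M : ℝ) / (M + 1)) ^ M := by
  have hM0 : (M : ℝ) ≠ 0 := by positivity
  induction k with
  | zero => simp [bidArea_zero, hq, hb]; ring
  | succ k ih =>
    have hpow : ((M : ℝ) / (M + 1)) ^ (M - k) =
        ((M : ℝ) / (M + 1)) ^ (M - (k + 1)) * (M / (M + 1)) := by
      rw [← pow_succ, show M - (k + 1) + 1 = M - k by omega]
    rw [← ih (by omega), bidArea_succ, hb (k + 1), hb (k + 1 + 1), hq (k + 1), hq k,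
      show M + 1 - (k + 1) = M - k by omega, show M + 1 - (k + 1 + 1) = M - (k + 1) by omega, hpow]
    push_cast
    field_simp
    ring

lemma Lcpab_even_le (hQ : 0 ≤ Q) (hM : 1 ≤ M) (hv₀ : 0 ≤ v₀) :
    Lcpab Q M (fun _ => v₀) q b ≤ Q * v₀ * ((M : ℝ) / (M + 1)) ^ M := by
  have hbid := isBidPts_even hq hb hQ hM hv₀
  have hqM : q M = Q := by rw [hq, mul_div_cancel_left₀ Q (by positivity)]
  refine csSup_le ⟨_, 0, ⟨le_rfl, hQ⟩, rfl⟩ ?_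
  rintro r ⟨t, ⟨ht0, htQ⟩, rfl⟩
  rcases htQ.lt_or_eq with htQ | rfl
  · obtain ⟨k, hk, hkM, ht⟩ := exists_mem_Ico_of_lt (hbid.1 ▸ ht0) (hqM ▸ htQ)
    have hgap : 0 ≤ v₀ - b k := by
      rw [hb, mul_one_sub, sub_sub_cancel]
      positivity
    have hleft := bidArea_even_add_sub_eq hq hb hM (k := k - 1) (by omega)
    rw [Nat.sub_add_cancel hk] at hleft
    rw [hbid.Rcpab_const_of_mem_Ico v₀ hk hkM ht, pos, max_eq_left hgap]
    nlinarith [mul_le_mul_of_nonneg_right ht.1 hgap]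
  · have hlast := bidArea_even_add_sub_eq hq hb hM le_rfl
    rw [hb (M + 1), hqM] at hlast
    rw [hbid.Rcpab_const_of_le v₀ hqM.le, sub_self, zero_mul, add_zero, ← hlast]
    simp

end EvenBid

/-- with constant marginal value `v > 0`, the `M`-point bid with evenly
spaced quantity points `q_k = kQ/M` and bids
`b_k = (v/(M+1)) Σ_{k'=k}^M (M/(M+1))^{k'−k}` is a minimax-loss bid in the constrained
pay-as-bid auction. -/
theorem constrained_pab_constant_values_closed_form
    (Q : ℝ) (hQ : 0 < Q) (M : ℕ) (hM : 1 ≤ M) (v₀ : ℝ) (hv₀ : 0 < v₀)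
    (q b : ℕ → ℝ)
    (hq : ∀ k, q k = (k : ℝ) * Q / M)
    (hb : ∀ k, b k = (v₀ / (M + 1)) * ∑ j ∈ Finset.Icc k M, ((M : ℝ) / (M + 1)) ^ (j - k)) :
    IsMinimaxCPAB Q M (fun _ => v₀) q b := by
  have hb' := bid_eq_mul_one_sub_pow hb
  refine ⟨isBidPts_even hq hb' hQ.le hM hv₀.le, fun q' b' hbid' => ?_⟩
  exact (Lcpab_even_le hq hb' hQ.le hM hv₀.le).trans (hbid'.le_Lcpab_const v₀ hQ hM)

end
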